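/- For every z ∈ B one has cos(arccos(z)) = z, where cos is the complex cosine and arccos is the complex arccosine defined via the explicit formula below. -/
import Mathlib


/-- The real area hyperbolic cosine, `arcosh x = log (x + √(x² − 1))`. -/
noncomputable def arcosh (x : ℝ) : ℝ := Real.log (x + Real.sqrt (x ^ 2 - 1))

/-- `G₋ = √((r²+s²−1)² + 4s²) − (r²+s²)` for `z = r + i·s`. -/
noncomputable def Gminus (z : ℂ) : ℝ :=
  Real.sqrt ((z.re ^ 2 + z.im ^ 2 - 1) ^ 2 + 4 * z.im ^ 2) - (z.re ^ 2 + z.im ^ 2)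

/-- `G₊ = √((r²+s²−1)² + 4s²) + (r²+s²)` for `z = r + i·s`. -/
noncomputable def Gplus (z : ℂ) : ℝ :=
  Real.sqrt ((z.re ^ 2 + z.im ^ 2 - 1) ^ 2 + 4 * z.im ^ 2) + (z.re ^ 2 + z.im ^ 2)

/-- The complex arcsine: `arcsin(r+is) = ½·(sgn r · arccos G₋ + i · sgn s · arcosh G₊)`. -/
noncomputable def carcsin (z : ℂ) : ℂ :=
  (1 / 2 : ℂ) *
    (((Real.sign z.re * Real.arccos (Gminus z) : ℝ) : ℂ) +
      Complex.I * ((Real.sign z.im * arcosh (Gplus z) : ℝ) : ℂ))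

/-- The complex arccosine: `arccos z = π/2 − arcsin z`. -/
noncomputable def carccos (z : ℂ) : ℂ := ((Real.pi / 2 : ℝ) : ℂ) - carcsin z
/-- The set `B = ℂ \ {t ∈ ℝ : t < −1 or t > 1}`. -/
def setB : Set ℂ := {z : ℂ | ¬ (z.im = 0 ∧ (z.re < -1 ∨ 1 < z.re))}

/-- The set `A = {a + i·b : 0 < a < π} ∪ {0, π}`. -/
noncomputable def setA : Set ℂ :=
  {z : ℂ | 0 < z.re ∧ z.re < Real.pi} ∪ {0, ((Real.pi : ℝ) : ℂ)}

lemma cosh_arcosh {x : ℝ} (hx : 1 ≤ x) : Real.cosh (arcosh x) = x := by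
  have h1 : (0:ℝ) ≤ x ^ 2 - 1 := by nlinarith
  have hs : Real.sqrt (x ^ 2 - 1) ^ 2 = x ^ 2 - 1 := Real.sq_sqrt h1
  have hsnn : (0:ℝ) ≤ Real.sqrt (x ^ 2 - 1) := Real.sqrt_nonneg _
  have hy : (0:ℝ) < x + Real.sqrt (x ^ 2 - 1) := by nlinarith
  rw [arcosh, Real.cosh_log hy]
  have hinv : (x + Real.sqrt (x ^ 2 - 1))⁻¹ = x - Real.sqrt (x ^ 2 - 1) :=
    inv_eq_of_mul_eq_one_right (by nlinarith)
  rw [hinv]; ring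

lemma sinh_half_eq {u : ℝ} (hu : 0 ≤ u) :
    Real.sinh (u / 2) = Real.sqrt ((Real.cosh u - 1) / 2) := by
  have h2 : 2 * (u / 2) = u := by ring
  have hc := Real.cosh_two_mul (u / 2)
  rw [h2] at hc
  have hnn : 0 ≤ Real.sinh (u / 2) := by
    rw [← Real.sinh_zero]; exact Real.sinh_le_sinh.mpr (by linarith)
  rw [← Real.sqrt_sq hnn]
  congr 1
  nlinarith [Real.cosh_sq (u / 2)]

lemma cosh_half_eq (u : ℝ) :
    Real.cosh (u / 2) = Real.sqrt ((Real.cosh u + 1) / 2) := by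
  have h2 : 2 * (u / 2) = u := by ring
  have hc := Real.cosh_two_mul (u / 2)
  rw [h2] at hc
  have hnn : 0 ≤ Real.cosh (u / 2) := (Real.cosh_pos _).le
  rw [← Real.sqrt_sq hnn]
  congr 1
  nlinarith [Real.cosh_sq (u / 2)]

set_option maxHeartbeats 1000000 in
lemma key (z : ℂ) (hz : z ∈ setB) : Complex.sin (carcsin z) = z := by
  simp only [setB, Set.mem_setOf_eq] at hz
  set r := z.re with hr
  set s := z.im with hs
  set m : ℝ := r ^ 2 + s ^ 2 with hm
  set S : ℝ := Real.sqrt ((m - 1) ^ 2 + 4 * s ^ 2) with hS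
  have hSnn : 0 ≤ S := Real.sqrt_nonneg _
  have hS2 : S ^ 2 = (m - 1) ^ 2 + 4 * s ^ 2 := Real.sq_sqrt (by positivity)
  have hmnn : 0 ≤ m := by positivity
  have hGm : Gminus z = S - m := by rw [Gminus]
  have hGp : Gplus z = S + m := by rw [Gplus]
  -- bounds
  have hGm_le : Gminus z ≤ 1 := by
    rw [hGm]; nlinarith [hS2, hSnn, hmnn, sq_nonneg r, sq_nonneg s]
  have hGm_ge : -1 ≤ Gminus z := by
    rw [hGm]; nlinarith [hS2, hSnn, hmnn, sq_nonneg s]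
  have hGp_ge : 1 ≤ Gplus z := by
    rw [hGp]; nlinarith [hS2, hSnn, hmnn, sq_nonneg s]
  set t : ℝ := Real.arccos (Gminus z) with ht
  set u : ℝ := arcosh (Gplus z) with hu
  have hcost : Real.cos t = S - m := by
    rw [ht, Real.cos_arccos hGm_ge hGm_le, hGm]
  have hcoshu : Real.cosh u = S + m := by
    rw [hu, cosh_arcosh hGp_ge, hGp]
  have ht0 : 0 ≤ t := Real.arccos_nonneg _
  have htpi : t ≤ Real.pi := Real.arccos_le_pi _
  have hu0 : 0 ≤ u := by
    rw [hu, arcosh]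
    apply Real.log_nonneg
    have h1 : 0 ≤ Real.sqrt (Gplus z ^ 2 - 1) := Real.sqrt_nonneg _
    linarith [hGp_ge]
  -- half angle values
  have hsin_half : Real.sin (t / 2) = Real.sqrt ((1 - (S - m)) / 2) := by
    rw [← hcost]; exact Real.sin_half_eq_sqrt ht0 (by linarith [Real.pi_pos])
  have hcos_half : Real.cos (t / 2) = Real.sqrt ((1 + (S - m)) / 2) := by
    rw [← hcost]; exact Real.cos_half (by linarith) htpi
  have hsinh_half : Real.sinh (u / 2) = Real.sqrt (((S + m) - 1) / 2) := by
    rw [← hcoshu]; exact sinh_half_eq hu0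
  have hcosh_half : Real.cosh (u / 2) = Real.sqrt (((S + m) + 1) / 2) := by
    rw [← hcoshu]; exact cosh_half_eq u
  -- products
  have hprod1 : Real.sin (t / 2) * Real.cosh (u / 2) = |r| := by
    rw [hsin_half, hcosh_half, ← Real.sqrt_mul (by linarith)]
    rw [show (1 - (S - m)) / 2 * (((S + m) + 1) / 2) = r ^ 2 by
      linear_combination (-1/4 : ℝ) * hS2 + hm]
    exact Real.sqrt_sq_eq_abs r
  have hprod2 : Real.cos (t / 2) * Real.sinh (u / 2) = |s| := by
    rw [hcos_half, hsinh_half, ← Real.sqrt_mul (by linarith)]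
    rw [show (1 + (S - m)) / 2 * (((S + m) - 1) / 2) = s ^ 2 by
      linear_combination (1/4 : ℝ) * hS2]
    exact Real.sqrt_sq_eq_abs s
  -- degenerate cases
  have hr0 : r = 0 → t = 0 := by
    intro h
    have h1 : (m - 1) ^ 2 + 4 * s ^ 2 = (1 + m) ^ 2 := by rw [hm, h]; ring
    have h2 : S = 1 + m := by rw [hS, h1]; exact Real.sqrt_sq (by linarith)
    have h3 : Gminus z = 1 := by rw [hGm, h2]; ring
    rw [ht, h3, Real.arccos_one]
  have hs0 : s = 0 → u = 0 := by
    intro h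
    have hb : ¬ (z.im = 0 ∧ (z.re < -1 ∨ 1 < z.re)) := hz
    have hr1 : -1 ≤ r ∧ r ≤ 1 := by
      constructor
      · by_contra h1; push_neg at h1; exact hb ⟨h, Or.inl h1⟩
      · by_contra h1; push_neg at h1; exact hb ⟨h, Or.inr h1⟩
    have hm1 : m ≤ 1 := by rw [hm, h]; nlinarith [hr1.1, hr1.2]
    have : S = 1 - m := by
      rw [hS, h]
      rw [show (m - 1) ^ 2 + 4 * (0:ℝ) ^ 2 = (1 - m) ^ 2 by ring]
      exact Real.sqrt_sq (by linarith)
    have hgp1 : Gplus z = 1 := by rw [hGp, this]; ring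
    rw [hu, hgp1, arcosh]
    norm_num
  -- main real equations
  set a : ℝ := Real.sign r * t / 2 with ha
  set b : ℝ := Real.sign s * u / 2 with hb
  have hRe : Real.sin a * Real.cosh b = r := by
    rcases lt_trichotomy r 0 with h | h | h
    · have hsr : Real.sign r = -1 := Real.sign_of_neg h
      have hcb : Real.cosh b = Real.cosh (u / 2) := by
        rcases lt_trichotomy s 0 with h' | h' | h'
        · rw [hb, Real.sign_of_neg h', show (-1 : ℝ) * u / 2 = -(u/2) by ring, Real.cosh_neg]
        · rw [hb, h', Real.sign_zero, hs0 h']; norm_num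
        · rw [hb, Real.sign_of_pos h', one_mul]
      rw [ha, hsr, show (-1 : ℝ) * t / 2 = -(t/2) by ring, Real.sin_neg, hcb, neg_mul,
        hprod1, abs_of_neg h, neg_neg]
    · rw [ha, h, Real.sign_zero, zero_mul, zero_div, Real.sin_zero, zero_mul]
    · have hsr : Real.sign r = 1 := Real.sign_of_pos h
      have hcb : Real.cosh b = Real.cosh (u / 2) := by
        rcases lt_trichotomy s 0 with h' | h' | h'
        · rw [hb, Real.sign_of_neg h', show (-1 : ℝ) * u / 2 = -(u/2) by ring, Real.cosh_neg]
        · rw [hb, h', Real.sign_zero, hs0 h']; norm_num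
        · rw [hb, Real.sign_of_pos h', one_mul]
      rw [ha, hsr, one_mul, hcb, hprod1, abs_of_pos h]
  have hIm : Real.cos a * Real.sinh b = s := by
    have hca : Real.cos a = Real.cos (t / 2) := by
      rcases lt_trichotomy r 0 with h | h | h
      · rw [ha, Real.sign_of_neg h, show (-1 : ℝ) * t / 2 = -(t/2) by ring, Real.cos_neg]
      · rw [ha, h, Real.sign_zero, hr0 h]; norm_num
      · rw [ha, Real.sign_of_pos h, one_mul]
    rcases lt_trichotomy s 0 with h | h | h
    · rw [hb, Real.sign_of_neg h, show (-1 : ℝ) * u / 2 = -(u/2) by ring, Real.sinh_neg, hca,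
        mul_neg, hprod2, abs_of_neg h, neg_neg]
    · rw [hb, h, Real.sign_zero, zero_mul, zero_div, Real.sinh_zero, mul_zero]
    · rw [hb, Real.sign_of_pos h, one_mul, hca, hprod2, abs_of_pos h]
  -- assemble
  have hform : carcsin z = (a : ℂ) + (b : ℂ) * Complex.I := by
    rw [carcsin, ha, hb, ← ht, ← hu, ← hr, ← hs]
    push_cast
    ring
  rw [hform, Complex.sin_add_mul_I]
  rw [← Complex.ofReal_sin, ← Complex.ofReal_cos, ← Complex.ofReal_cosh, ← Complex.ofReal_sinh]
  rw [show ((Real.sin a : ℂ) * (Real.cosh b : ℂ) + (Real.cos a : ℂ) * (Real.sinh b : ℂ) * Complex.I)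
      = ((Real.sin a * Real.cosh b : ℝ) : ℂ) + ((Real.cos a * Real.sinh b : ℝ) : ℂ) * Complex.I by
    push_cast; ring]
  rw [hRe, hIm]
  exact (Complex.re_add_im z)

/-- for every `z ∈ B`, `cos (arccos z) = z`. -/
theorem stmt2 : ∀ z ∈ setB, Complex.cos (carccos z) = z := by
  intro z hz
  rw [carccos, show ((Real.pi / 2 : ℝ) : ℂ) = (Real.pi : ℂ) / 2 by push_cast; ring,
    Complex.cos_pi_div_two_sub]
  exact key z hz
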